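/- arXiv:math/0111131 — 2 statements merged into one kernel-verified Lean document; each statement's English description precedes it below -/
import Mathlib

section
/- The isotropy subalgebra inside u(2) of a nonzero spinor ψ ∈ Δ_5^2 (i.e., the set of ω ∈ u(2) with ω·ψ = 0) is the 1-dimensional diagonal u(1) given by x_{12} = x_{34} and x_{13} = x_{14} = x_{23} = x_{24} = x_{i5} = 0. -/
open Matrix Complex

/-- The explicit matrices of Clifford multiplication by `e₁,…,e₅` on the 5-dimensional
spin representation `Δ₅ ≅ ℂ⁴` (indexed `0,…,4`). -/
noncomputable def cl : Fin 5 → Matrix (Fin 4) (Fin 4) ℂ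
  | 0 => !![0, 0, 0, I; 0, 0, I, 0; 0, I, 0, 0; I, 0, 0, 0]
  | 1 => !![0, 0, 0, -1; 0, 0, 1, 0; 0, -1, 0, 0; 1, 0, 0, 0]
  | 2 => !![0, 0, -I, 0; 0, 0, 0, I; -I, 0, 0, 0; 0, I, 0, 0]
  | 3 => !![0, 0, 1, 0; 0, 0, 0, 1; -1, 0, 0, 0; 0, -1, 0, 0]
  | 4 => !![I, 0, 0, 0; 0, I, 0, 0; 0, 0, -I, 0; 0, 0, 0, -I]

/-- The fundamental form `F = e₁·e₂ + e₃·e₄` acting on spinors. -/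
noncomputable def Fspin : Matrix (Fin 4) (Fin 4) ℂ := cl 0 * cl 1 + cl 2 * cl 3


/-!
`F` is diagonal, `diag(2i, -2i, 0, 0)`, so `Δ₅²` consists of the spinors supported on the last
two coordinates. In these coordinates an element of `u(2)` is block diagonal: it acts on the first
two coordinates through its `u(1)`-part `x₁₂ + x₃₄`, and on `Δ₅²` as the imaginary quaternion with
coordinates `(x₁₂ - x₃₄, 2x₁₃, 2x₂₃)`. An imaginary quaternion squares to minus its squared norm,
so it annihilates a nonzero vector only if it vanishes.
-/

theorem Fin.sum_sum_ite_lt_five {M : Type*} [AddCommMonoid M] (f : Fin 5 → Fin 5 → M) :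
    (∑ i : Fin 5, ∑ j : Fin 5, if i < j then f i j else 0) =
      f 0 1 + f 0 2 + f 0 3 + f 0 4 + f 1 2 + f 1 3 + f 1 4 + f 2 3 + f 2 4 + f 3 4 := by
  simp only [Fin.sum_univ_five]
  simp +decide only [↓reduceIte, zero_add, add_zero]
  abel

theorem Fspin_eq_diagonal : Fspin = diagonal ![2 * I, -2 * I, 0, 0] := by
  ext i j
  fin_cases i <;> fin_cases j <;> simp [Fspin, cl] <;> ring

theorem Fspin_mulVec_eq_zero_iff (ψ : Fin 4 → ℂ) : Fspin *ᵥ ψ = 0 ↔ ψ 0 = 0 ∧ ψ 1 = 0 := by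
  simp [Fspin_eq_diagonal, funext_iff, Fin.forall_fin_succ, mulVec_diagonal]

noncomputable def cliffordTwoForm (x : Fin 5 → Fin 5 → ℝ) : Matrix (Fin 4) (Fin 4) ℂ :=
  ∑ i : Fin 5, ∑ j : Fin 5, if i < j then (x i j : ℂ) • (cl i * cl j) else 0

theorem cliffordTwoForm_of_mem_u2 (x : Fin 5 → Fin 5 → ℝ)
    (hu1 : x 0 3 + x 1 2 = 0) (hu2 : x 0 2 - x 1 3 = 0) (hu3 : ∀ i, x i 4 = 0) :
    cliffordTwoForm x =
      !![I * (x 0 1 + x 2 3), 0, 0, 0;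
         0, -I * (x 0 1 + x 2 3), 0, 0;
         0, 0, I * (x 0 1 - x 2 3), -(2 * x 0 2 + I * (2 * x 1 2));
         0, 0, 2 * x 0 2 - I * (2 * x 1 2), -I * (x 0 1 - x 2 3)] := by
  have h03 : (x 0 3 : ℂ) = -x 1 2 := by exact_mod_cast eq_neg_of_add_eq_zero_left hu1
  have h13 : (x 1 3 : ℂ) = x 0 2 := by exact_mod_cast (sub_eq_zero.1 hu2).symm
  rw [cliffordTwoForm, Fin.sum_sum_ite_lt_five]
  simp only [hu3, ofReal_zero, zero_smul, add_zero, h03, h13]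
  ext i j
  fin_cases i <;> fin_cases j <;> simp [cl] <;> ring

theorem blockDiagonal_mulVec_eq_zero_iff {c d a₀₀ a₀₁ a₁₀ a₁₁ : ℂ} {ψ : Fin 4 → ℂ}
    (hψ0 : ψ 0 = 0) (hψ1 : ψ 1 = 0) :
    !![c, 0, 0, 0; 0, d, 0, 0; 0, 0, a₀₀, a₀₁; 0, 0, a₁₀, a₁₁] *ᵥ ψ = 0 ↔
      a₀₀ * ψ 2 + a₀₁ * ψ 3 = 0 ∧ a₁₀ * ψ 2 + a₁₁ * ψ 3 = 0 := by
  simp [funext_iff, Fin.forall_fin_succ, vecHead, vecTail, hψ0, hψ1]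

/-- The matrix `!![I * p, -(q + I * r); q - I * r, -(I * p)]` represents the imaginary quaternion
`p i + q j + r k`; it squares to `-(p² + q² + r²)`. -/
theorem imaginaryQuaternion_apply_eq_zero_iff (p q r : ℝ) {a b : ℂ} (hab : a ≠ 0 ∨ b ≠ 0) :
    (I * p * a - (q + I * r) * b = 0 ∧ (q - I * r) * a - I * p * b = 0) ↔
      p = 0 ∧ q = 0 ∧ r = 0 := by
  constructor
  · rintro ⟨h₁, h₂⟩
    have hsq : ((p ^ 2 + q ^ 2 + r ^ 2 : ℝ) : ℂ) = 0 := by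
      rcases hab with ha | hb
      · refine (mul_eq_zero.1 (?_ : _ * a = 0)).resolve_right ha
        push_cast
        linear_combination (-I * p) * h₁ + (q + I * r) * h₂ + ((p ^ 2 + r ^ 2) * a) * I_sq
      · refine (mul_eq_zero.1 (?_ : _ * b = 0)).resolve_right hb
        push_cast
        linear_combination -(q - I * r) * h₁ + (I * p) * h₂ + ((p ^ 2 + r ^ 2) * b) * I_sq
    have hsq' : p ^ 2 + q ^ 2 + r ^ 2 = 0 := by exact_mod_cast hsq
    refine ⟨?_, ?_, ?_⟩ <;> nlinarith [sq_nonneg p, sq_nonneg q, sq_nonneg r]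
  · rintro ⟨rfl, rfl, rfl⟩
    simp

/-- The isotropy subalgebra inside `u(2)` of a nonzero spinor `ψ ∈ Δ₅² = ker F` is the
diagonal `u(1)`: for `ω = Σ_{i<j} x_{ij} e_i·e_j` in `u(2)` one has `ω·ψ = 0` iff
`x₁₂ = x₃₄` and `x₁₃ = x₁₄ = x₂₃ = x₂₄ = x_{i5} = 0` (indices shifted down by one). -/
theorem stmt4 (x : Fin 5 → Fin 5 → ℝ)
    (hu1 : x 0 3 + x 1 2 = 0) (hu2 : x 0 2 - x 1 3 = 0) (hu3 : ∀ i, x i 4 = 0)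
    (ψ : Fin 4 → ℂ) (hψ : ψ ≠ 0) (hker : Fspin *ᵥ ψ = 0) :
    (∑ i : Fin 5, ∑ j : Fin 5, if i < j then (x i j : ℂ) • (cl i * cl j) else 0) *ᵥ ψ = 0 ↔
      (x 0 1 = x 2 3 ∧ x 0 2 = 0 ∧ x 0 3 = 0 ∧ x 1 2 = 0 ∧ x 1 3 = 0) := by
  obtain ⟨hψ0, hψ1⟩ := (Fspin_mulVec_eq_zero_iff ψ).1 hker
  have hψ23 : ψ 2 ≠ 0 ∨ ψ 3 ≠ 0 := by
    contrapose! hψ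
    ext k
    fin_cases k <;> simp [hψ0, hψ1, hψ.1, hψ.2]
  have hquat := imaginaryQuaternion_apply_eq_zero_iff
    (x 0 1 - x 2 3) (2 * x 0 2) (2 * x 1 2) hψ23
  change cliffordTwoForm x *ᵥ ψ = 0 ↔ _
  rw [cliffordTwoForm_of_mem_u2 x hu1 hu2 hu3, blockDiagonal_mulVec_eq_zero_iff hψ0 hψ1]
  refine (Iff.trans ?_ hquat).trans ⟨fun ⟨h01, h02, h12⟩ => ?_, fun ⟨h01, h02, _, h12, _⟩ => ?_⟩
  · push_cast
    constructor <;> rintro ⟨h₁, h₂⟩ <;> exact ⟨by linear_combination h₁, by linear_combination h₂⟩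
  · exact ⟨by linarith, by linarith, by linarith, by linarith, by linarith⟩
  · exact ⟨by linarith, by linarith, by linarith⟩
end

section
/- Let ψ ∈ Δ_5^2 and X a vector orthogonal to e_5, and let f be a function with differential df satisfying df(e_5)=0. Then as endomorphisms of the spinor space, 2·(X ⨼ ((df∘φ) ∧ F)) = -df·X + X·df on Δ_5^2, and 2·(X ⨼ ((df∘φ) ∧ F)) = df·X - X·df on Δ_5^±, where · denotes Clifford multiplication. -/
set_option maxHeartbeats 1000000
set_option maxRecDepth 10000


open Matrix Complex

/-- Clifford multiplication by the (co)vector with coordinates `v`. -/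
noncomputable def clv (v : Fin 5 → ℝ) : Matrix (Fin 4) (Fin 4) ℂ :=
  ∑ i : Fin 5, (v i : ℂ) • cl i

/-- The coefficient matrix of the fundamental 2-form `F = e₁∧e₂ + e₃∧e₄`. -/
def Fcoef : Matrix (Fin 5) (Fin 5) ℝ :=
  !![0, 1, 0, 0, 0;
     -1, 0, 0, 0, 0;
     0, 0, 0, 1, 0;
     0, 0, -1, 0, 0;
     0, 0, 0, 0, 0]

/-- The coordinates of `df ∘ φ` for the 1-form `df` with coordinates `y`
(`φe₁ = -e₂`, `φe₂ = e₁`, `φe₃ = -e₄`, `φe₄ = e₃`, `φe₅ = 0`). -/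
def dfphi (y : Fin 5 → ℝ) : Fin 5 → ℝ := ![-(y 1), y 0, -(y 3), y 2, 0]

/-- The coefficients of the 2-form `X ⨼ ((df∘φ) ∧ F)`, where `X` has coordinates `x`
and `df` has coordinates `y`. -/
def contrCoef (x y : Fin 5 → ℝ) : Fin 5 → Fin 5 → ℝ := fun b c =>
  (∑ i : Fin 5, dfphi y i * x i) * Fcoef b c
    - dfphi y b * (∑ i : Fin 5, x i * Fcoef i c)
    + dfphi y c * (∑ i : Fin 5, x i * Fcoef i b)

/-- The action of the 2-form `X ⨼ ((df∘φ) ∧ F)` on spinors. -/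
noncomputable def contrAction (x y : Fin 5 → ℝ) : Matrix (Fin 4) (Fin 4) ℂ :=
  ∑ i : Fin 5, ∑ j : Fin 5, if i < j then (contrCoef x y i j : ℂ) • (cl i * cl j) else 0


lemma cl_def0 : cl 0 = !![0, 0, 0, I; 0, 0, I, 0; 0, I, 0, 0; I, 0, 0, 0] := rfl
lemma cl_def1 : cl 1 = !![0, 0, 0, -1; 0, 0, 1, 0; 0, -1, 0, 0; 1, 0, 0, 0] := rfl
lemma cl_def2 : cl 2 = !![0, 0, -I, 0; 0, 0, 0, I; -I, 0, 0, 0; 0, I, 0, 0] := rfl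
lemma cl_def3 : cl 3 = !![0, 0, 1, 0; 0, 0, 0, 1; -1, 0, 0, 0; 0, -1, 0, 0] := rfl
lemma cl_def4 : cl 4 = !![I, 0, 0, 0; 0, I, 0, 0; 0, 0, -I, 0; 0, 0, 0, -I] := rfl

theorem mul_fin_four {α} [NonUnitalNonAssocSemiring α]
    (a11 a12 a13 a14 a21 a22 a23 a24 a31 a32 a33 a34 a41 a42 a43 a44
     b11 b12 b13 b14 b21 b22 b23 b24 b31 b32 b33 b34 b41 b42 b43 b44 : α) :
    !![a11,a12,a13,a14; a21,a22,a23,a24; a31,a32,a33,a34; a41,a42,a43,a44] *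
      !![b11,b12,b13,b14; b21,b22,b23,b24; b31,b32,b33,b34; b41,b42,b43,b44] =
    !![a11*b11+a12*b21+a13*b31+a14*b41, a11*b12+a12*b22+a13*b32+a14*b42,
       a11*b13+a12*b23+a13*b33+a14*b43, a11*b14+a12*b24+a13*b34+a14*b44;
       a21*b11+a22*b21+a23*b31+a24*b41, a21*b12+a22*b22+a23*b32+a24*b42,
       a21*b13+a22*b23+a23*b33+a24*b43, a21*b14+a22*b24+a23*b34+a24*b44;
       a31*b11+a32*b21+a33*b31+a34*b41, a31*b12+a32*b22+a33*b32+a34*b42,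
       a31*b13+a32*b23+a33*b33+a34*b43, a31*b14+a32*b24+a33*b34+a34*b44;
       a41*b11+a42*b21+a43*b31+a44*b41, a41*b12+a42*b22+a43*b32+a44*b42,
       a41*b13+a42*b23+a43*b33+a44*b43, a41*b14+a42*b24+a43*b34+a44*b44] := by
  ext i j
  fin_cases i <;> fin_cases j <;>
    simp [Matrix.mul_apply, Fin.sum_univ_four, Matrix.vecHead, Matrix.vecTail]

lemma clmul01 : cl 0 * cl 1 = !![I, 0, 0, 0; 0, (-I), 0, 0; 0, 0, I, 0; 0, 0, 0, (-I)] := by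
  rw [cl_def0, cl_def1, mul_fin_four]
  norm_num

lemma clmul02 : cl 0 * cl 2 = !![0, (-1), 0, 0; 1, 0, 0, 0; 0, 0, 0, (-1); 0, 0, 1, 0] := by
  rw [cl_def0, cl_def2, mul_fin_four]
  norm_num

lemma clmul03 : cl 0 * cl 3 = !![0, (-I), 0, 0; (-I), 0, 0, 0; 0, 0, 0, I; 0, 0, I, 0] := by
  rw [cl_def0, cl_def3, mul_fin_four]
  norm_num

lemma clmul04 : cl 0 * cl 4 = !![0, 0, 0, 1; 0, 0, 1, 0; 0, (-1), 0, 0; (-1), 0, 0, 0] := by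
  rw [cl_def0, cl_def4, mul_fin_four]
  norm_num

lemma clmul12 : cl 1 * cl 2 = !![0, (-I), 0, 0; (-I), 0, 0, 0; 0, 0, 0, (-I); 0, 0, (-I), 0] := by
  rw [cl_def1, cl_def2, mul_fin_four]
  norm_num

lemma clmul13 : cl 1 * cl 3 = !![0, 1, 0, 0; (-1), 0, 0, 0; 0, 0, 0, (-1); 0, 0, 1, 0] := by
  rw [cl_def1, cl_def3, mul_fin_four]
  norm_num

lemma clmul14 : cl 1 * cl 4 = !![0, 0, 0, I; 0, 0, (-I), 0; 0, (-I), 0, 0; I, 0, 0, 0] := by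
  rw [cl_def1, cl_def4, mul_fin_four]
  norm_num

lemma clmul23 : cl 2 * cl 3 = !![I, 0, 0, 0; 0, (-I), 0, 0; 0, 0, (-I), 0; 0, 0, 0, I] := by
  rw [cl_def2, cl_def3, mul_fin_four]
  norm_num

lemma clmul24 : cl 2 * cl 4 = !![0, 0, (-1), 0; 0, 0, 0, 1; 1, 0, 0, 0; 0, (-1), 0, 0] := by
  rw [cl_def2, cl_def4, mul_fin_four]
  norm_num

lemma clmul34 : cl 3 * cl 4 = !![0, 0, (-I), 0; 0, 0, 0, (-I); (-I), 0, 0, 0; 0, (-I), 0, 0] := by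
  rw [cl_def3, cl_def4, mul_fin_four]
  norm_num

lemma ccoef01 (x y : Fin 5 → ℝ) (hx : x 4 = 0) (hy : y 4 = 0) :
    contrCoef x y 0 1 = (-1) * (x 2) * (y 3) + (1) * (x 3) * (y 2) := by
  simp [contrCoef, dfphi, Fcoef, Fin.sum_univ_five, Matrix.vecHead, Matrix.vecTail, hx, hy]
  try ring

lemma ccoef02 (x y : Fin 5 → ℝ) (hx : x 4 = 0) (hy : y 4 = 0) :
    contrCoef x y 0 2 = (1) * (x 1) * (y 3) + (-1) * (x 3) * (y 1) := by
  simp [contrCoef, dfphi, Fcoef, Fin.sum_univ_five, Matrix.vecHead, Matrix.vecTail, hx, hy]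
  try ring

lemma ccoef03 (x y : Fin 5 → ℝ) (hx : x 4 = 0) (hy : y 4 = 0) :
    contrCoef x y 0 3 = (-1) * (x 1) * (y 2) + (1) * (x 2) * (y 1) := by
  simp [contrCoef, dfphi, Fcoef, Fin.sum_univ_five, Matrix.vecHead, Matrix.vecTail, hx, hy]
  try ring

lemma ccoef04 (x y : Fin 5 → ℝ) (hx : x 4 = 0) (hy : y 4 = 0) :
    contrCoef x y 0 4 = 0 := by
  simp [contrCoef, dfphi, Fcoef, Fin.sum_univ_five, Matrix.vecHead, Matrix.vecTail, hx, hy]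
  try ring

lemma ccoef12 (x y : Fin 5 → ℝ) (hx : x 4 = 0) (hy : y 4 = 0) :
    contrCoef x y 1 2 = (-1) * (x 0) * (y 3) + (1) * (x 3) * (y 0) := by
  simp [contrCoef, dfphi, Fcoef, Fin.sum_univ_five, Matrix.vecHead, Matrix.vecTail, hx, hy]
  try ring

lemma ccoef13 (x y : Fin 5 → ℝ) (hx : x 4 = 0) (hy : y 4 = 0) :
    contrCoef x y 1 3 = (1) * (x 0) * (y 2) + (-1) * (x 2) * (y 0) := by
  simp [contrCoef, dfphi, Fcoef, Fin.sum_univ_five, Matrix.vecHead, Matrix.vecTail, hx, hy]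
  try ring

lemma ccoef14 (x y : Fin 5 → ℝ) (hx : x 4 = 0) (hy : y 4 = 0) :
    contrCoef x y 1 4 = 0 := by
  simp [contrCoef, dfphi, Fcoef, Fin.sum_univ_five, Matrix.vecHead, Matrix.vecTail, hx, hy]
  try ring

lemma ccoef23 (x y : Fin 5 → ℝ) (hx : x 4 = 0) (hy : y 4 = 0) :
    contrCoef x y 2 3 = (-1) * (x 0) * (y 1) + (1) * (x 1) * (y 0) := by
  simp [contrCoef, dfphi, Fcoef, Fin.sum_univ_five, Matrix.vecHead, Matrix.vecTail, hx, hy]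
  try ring

lemma ccoef24 (x y : Fin 5 → ℝ) (hx : x 4 = 0) (hy : y 4 = 0) :
    contrCoef x y 2 4 = 0 := by
  simp [contrCoef, dfphi, Fcoef, Fin.sum_univ_five, Matrix.vecHead, Matrix.vecTail, hx, hy]
  try ring

lemma ccoef34 (x y : Fin 5 → ℝ) (hx : x 4 = 0) (hy : y 4 = 0) :
    contrCoef x y 3 4 = 0 := by
  simp [contrCoef, dfphi, Fcoef, Fin.sum_univ_five, Matrix.vecHead, Matrix.vecTail, hx, hy]
  try ring


lemma clv_eq (v : Fin 5 → ℝ) : clv v =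
    !![I * (v 4 : ℂ), 0, -I * (v 2 : ℂ) + (v 3 : ℂ), I * (v 0 : ℂ) + -(v 1 : ℂ);
       0, I * (v 4 : ℂ), I * (v 0 : ℂ) + (v 1 : ℂ), I * (v 2 : ℂ) + (v 3 : ℂ);
       -I * (v 2 : ℂ) + -(v 3 : ℂ), I * (v 0 : ℂ) + -(v 1 : ℂ), -I * (v 4 : ℂ), 0;
       I * (v 0 : ℂ) + (v 1 : ℂ), I * (v 2 : ℂ) + -(v 3 : ℂ), 0, -I * (v 4 : ℂ)] := by
  have : clv v = (v 0 : ℂ) • cl 0 + (v 1 : ℂ) • cl 1 + (v 2 : ℂ) • cl 2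
      + (v 3 : ℂ) • cl 3 + (v 4 : ℂ) • cl 4 := by
    simp [clv, Fin.sum_univ_five]
    try abel
  rw [this, cl_def0, cl_def1, cl_def2, cl_def3, cl_def4]
  norm_num [Matrix.smul_of, Matrix.of_add_of, Matrix.smul_cons, Matrix.smul_empty,
    Matrix.cons_add_cons, Matrix.empty_add_empty] <;> try ring
  all_goals simp

lemma contrAction_expand (x y : Fin 5 → ℝ) :
    contrAction x y =
      (contrCoef x y 0 1 : ℂ) • (cl 0 * cl 1) + (contrCoef x y 0 2 : ℂ) • (cl 0 * cl 2)
      + (contrCoef x y 0 3 : ℂ) • (cl 0 * cl 3) + (contrCoef x y 0 4 : ℂ) • (cl 0 * cl 4)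
      + (contrCoef x y 1 2 : ℂ) • (cl 1 * cl 2) + (contrCoef x y 1 3 : ℂ) • (cl 1 * cl 3)
      + (contrCoef x y 1 4 : ℂ) • (cl 1 * cl 4) + (contrCoef x y 2 3 : ℂ) • (cl 2 * cl 3)
      + (contrCoef x y 2 4 : ℂ) • (cl 2 * cl 4) + (contrCoef x y 3 4 : ℂ) • (cl 3 * cl 4) := by
  simp only [contrAction, Fin.sum_univ_five]
  simp only [show ((0:Fin 5) < 0) = False from by decide, show ((0:Fin 5) < 1) = True from by decide, show ((0:Fin 5) < 2) = True from by decide, show ((0:Fin 5) < 3) = True from by decide, show ((0:Fin 5) < 4) = True from by decide, show ((1:Fin 5) < 0) = False from by decide, show ((1:Fin 5) < 1) = False from by decide, show ((1:Fin 5) < 2) = True from by decide, show ((1:Fin 5) < 3) = True from by decide, show ((1:Fin 5) < 4) = True from by decide, show ((2:Fin 5) < 0) = False from by decide, show ((2:Fin 5) < 1) = False from by decide, show ((2:Fin 5) < 2) = False from by decide, show ((2:Fin 5) < 3) = True from by decide, show ((2:Fin 5) < 4) = True from by decide, show ((3:Fin 5) < 0) = False from by decide, show ((3:Fin 5) < 1)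 = False from by decide, show ((3:Fin 5) < 2) = False from by decide, show ((3:Fin 5) < 3) = False from by decide, show ((3:Fin 5) < 4) = True from by decide, show ((4:Fin 5) < 0) = False from by decide, show ((4:Fin 5) < 1) = False from by decide, show ((4:Fin 5) < 2) = False from by decide, show ((4:Fin 5) < 3) = False from by decide, show ((4:Fin 5) < 4) = False from by decide, if_true, if_false, add_zero, zero_add]
  abel

noncomputable def Amat (x y : Fin 5 → ℝ) : Matrix (Fin 4) (Fin 4) ℂ :=
  !![(-2*I)*(x 0:ℂ)*(y 1:ℂ) + (2*I)*(x 1:ℂ)*(y 0:ℂ) + (-2*I)*(x 2:ℂ)*(y 3:ℂ) + (2*I)*(x 3:ℂ)*(y 2:ℂ), (2)*(x 0:ℂ)*(y 2:ℂ) + (2*I)*(x 0:ℂ)*(y 3:ℂ) + (2*I)*(x 1:ℂ)*(y 2:ℂ) + (-2)*(x 1:ℂ)*(y 3:ℂ) + (-2)*(x 2:ℂ)*(y 0:ℂ) + (-2*I)*(x 2:ℂ)*(y 1:ℂ) + (-2*I)*(x 3:ℂ)*(y 0:ℂ) + (2)*(x 3:ℂ)*(y 1:ℂ), 0, 0;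
   (-2)*(x 0:ℂ)*(y 2:ℂ) + (2*I)*(x 0:ℂ)*(y 3:ℂ) + (2*I)*(x 1:ℂ)*(y 2:ℂ) + (2)*(x 1:ℂ)*(y 3:ℂ) + (2)*(x 2:ℂ)*(y 0:ℂ) + (-2*I)*(x 2:ℂ)*(y 1:ℂ) + (-2*I)*(x 3:ℂ)*(y 0:ℂ) + (-2)*(x 3:ℂ)*(y 1:ℂ), (2*I)*(x 0:ℂ)*(y 1:ℂ) + (-2*I)*(x 1:ℂ)*(y 0:ℂ) + (2*I)*(x 2:ℂ)*(y 3:ℂ) + (-2*I)*(x 3:ℂ)*(y 2:ℂ), 0, 0;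
   0, 0, (2*I)*(x 0:ℂ)*(y 1:ℂ) + (-2*I)*(x 1:ℂ)*(y 0:ℂ) + (-2*I)*(x 2:ℂ)*(y 3:ℂ) + (2*I)*(x 3:ℂ)*(y 2:ℂ), (-2)*(x 0:ℂ)*(y 2:ℂ) + (2*I)*(x 0:ℂ)*(y 3:ℂ) + (-2*I)*(x 1:ℂ)*(y 2:ℂ) + (-2)*(x 1:ℂ)*(y 3:ℂ) + (2)*(x 2:ℂ)*(y 0:ℂ) + (2*I)*(x 2:ℂ)*(y 1:ℂ) + (-2*I)*(x 3:ℂ)*(y 0:ℂ) + (2)*(x 3:ℂ)*(y 1:ℂ);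
   0, 0, (2)*(x 0:ℂ)*(y 2:ℂ) + (2*I)*(x 0:ℂ)*(y 3:ℂ) + (-2*I)*(x 1:ℂ)*(y 2:ℂ) + (2)*(x 1:ℂ)*(y 3:ℂ) + (-2)*(x 2:ℂ)*(y 0:ℂ) + (2*I)*(x 2:ℂ)*(y 1:ℂ) + (-2*I)*(x 3:ℂ)*(y 0:ℂ) + (-2)*(x 3:ℂ)*(y 1:ℂ), (-2*I)*(x 0:ℂ)*(y 1:ℂ) + (2*I)*(x 1:ℂ)*(y 0:ℂ) + (2*I)*(x 2:ℂ)*(y 3:ℂ) + (-2*I)*(x 3:ℂ)*(y 2:ℂ)]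

noncomputable def Bmat (x y : Fin 5 → ℝ) : Matrix (Fin 4) (Fin 4) ℂ :=
  !![(2*I)*(x 0:ℂ)*(y 1:ℂ) + (-2*I)*(x 1:ℂ)*(y 0:ℂ) + (2*I)*(x 2:ℂ)*(y 3:ℂ) + (-2*I)*(x 3:ℂ)*(y 2:ℂ), (-2)*(x 0:ℂ)*(y 2:ℂ) + (-2*I)*(x 0:ℂ)*(y 3:ℂ) + (-2*I)*(x 1:ℂ)*(y 2:ℂ) + (2)*(x 1:ℂ)*(y 3:ℂ) + (2)*(x 2:ℂ)*(y 0:ℂ) + (2*I)*(x 2:ℂ)*(y 1:ℂ) + (2*I)*(x 3:ℂ)*(y 0:ℂ) + (-2)*(x 3:ℂ)*(y 1:ℂ), 0, 0;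
   (2)*(x 0:ℂ)*(y 2:ℂ) + (-2*I)*(x 0:ℂ)*(y 3:ℂ) + (-2*I)*(x 1:ℂ)*(y 2:ℂ) + (-2)*(x 1:ℂ)*(y 3:ℂ) + (-2)*(x 2:ℂ)*(y 0:ℂ) + (2*I)*(x 2:ℂ)*(y 1:ℂ) + (2*I)*(x 3:ℂ)*(y 0:ℂ) + (2)*(x 3:ℂ)*(y 1:ℂ), (-2*I)*(x 0:ℂ)*(y 1:ℂ) + (2*I)*(x 1:ℂ)*(y 0:ℂ) + (-2*I)*(x 2:ℂ)*(y 3:ℂ) + (2*I)*(x 3:ℂ)*(y 2:ℂ), 0, 0;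
   0, 0, (2*I)*(x 0:ℂ)*(y 1:ℂ) + (-2*I)*(x 1:ℂ)*(y 0:ℂ) + (-2*I)*(x 2:ℂ)*(y 3:ℂ) + (2*I)*(x 3:ℂ)*(y 2:ℂ), (-2)*(x 0:ℂ)*(y 2:ℂ) + (2*I)*(x 0:ℂ)*(y 3:ℂ) + (-2*I)*(x 1:ℂ)*(y 2:ℂ) + (-2)*(x 1:ℂ)*(y 3:ℂ) + (2)*(x 2:ℂ)*(y 0:ℂ) + (2*I)*(x 2:ℂ)*(y 1:ℂ) + (-2*I)*(x 3:ℂ)*(y 0:ℂ) + (2)*(x 3:ℂ)*(y 1:ℂ);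
   0, 0, (2)*(x 0:ℂ)*(y 2:ℂ) + (2*I)*(x 0:ℂ)*(y 3:ℂ) + (-2*I)*(x 1:ℂ)*(y 2:ℂ) + (2)*(x 1:ℂ)*(y 3:ℂ) + (-2)*(x 2:ℂ)*(y 0:ℂ) + (2*I)*(x 2:ℂ)*(y 1:ℂ) + (-2*I)*(x 3:ℂ)*(y 0:ℂ) + (-2)*(x 3:ℂ)*(y 1:ℂ), (-2*I)*(x 0:ℂ)*(y 1:ℂ) + (2*I)*(x 1:ℂ)*(y 0:ℂ) + (2*I)*(x 2:ℂ)*(y 3:ℂ) + (-2*I)*(x 3:ℂ)*(y 2:ℂ)]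

noncomputable def Cmat (x y : Fin 5 → ℝ) : Matrix (Fin 4) (Fin 4) ℂ :=
  !![(-2*I)*(x 0:ℂ)*(y 1:ℂ) + (2*I)*(x 1:ℂ)*(y 0:ℂ) + (-2*I)*(x 2:ℂ)*(y 3:ℂ) + (2*I)*(x 3:ℂ)*(y 2:ℂ), (2)*(x 0:ℂ)*(y 2:ℂ) + (2*I)*(x 0:ℂ)*(y 3:ℂ) + (2*I)*(x 1:ℂ)*(y 2:ℂ) + (-2)*(x 1:ℂ)*(y 3:ℂ) + (-2)*(x 2:ℂ)*(y 0:ℂ) + (-2*I)*(x 2:ℂ)*(y 1:ℂ) + (-2*I)*(x 3:ℂ)*(y 0:ℂ) + (2)*(x 3:ℂ)*(y 1:ℂ), 0, 0;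
   (-2)*(x 0:ℂ)*(y 2:ℂ) + (2*I)*(x 0:ℂ)*(y 3:ℂ) + (2*I)*(x 1:ℂ)*(y 2:ℂ) + (2)*(x 1:ℂ)*(y 3:ℂ) + (2)*(x 2:ℂ)*(y 0:ℂ) + (-2*I)*(x 2:ℂ)*(y 1:ℂ) + (-2*I)*(x 3:ℂ)*(y 0:ℂ) + (-2)*(x 3:ℂ)*(y 1:ℂ), (2*I)*(x 0:ℂ)*(y 1:ℂ) + (-2*I)*(x 1:ℂ)*(y 0:ℂ) + (2*I)*(x 2:ℂ)*(y 3:ℂ) + (-2*I)*(x 3:ℂ)*(y 2:ℂ), 0, 0;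
   0, 0, (-2*I)*(x 0:ℂ)*(y 1:ℂ) + (2*I)*(x 1:ℂ)*(y 0:ℂ) + (2*I)*(x 2:ℂ)*(y 3:ℂ) + (-2*I)*(x 3:ℂ)*(y 2:ℂ), (2)*(x 0:ℂ)*(y 2:ℂ) + (-2*I)*(x 0:ℂ)*(y 3:ℂ) + (2*I)*(x 1:ℂ)*(y 2:ℂ) + (2)*(x 1:ℂ)*(y 3:ℂ) + (-2)*(x 2:ℂ)*(y 0:ℂ) + (-2*I)*(x 2:ℂ)*(y 1:ℂ) + (2*I)*(x 3:ℂ)*(y 0:ℂ) + (-2)*(x 3:ℂ)*(y 1:ℂ);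
   0, 0, (-2)*(x 0:ℂ)*(y 2:ℂ) + (-2*I)*(x 0:ℂ)*(y 3:ℂ) + (2*I)*(x 1:ℂ)*(y 2:ℂ) + (-2)*(x 1:ℂ)*(y 3:ℂ) + (2)*(x 2:ℂ)*(y 0:ℂ) + (-2*I)*(x 2:ℂ)*(y 1:ℂ) + (2*I)*(x 3:ℂ)*(y 0:ℂ) + (2)*(x 3:ℂ)*(y 1:ℂ), (2*I)*(x 0:ℂ)*(y 1:ℂ) + (-2*I)*(x 1:ℂ)*(y 0:ℂ) + (-2*I)*(x 2:ℂ)*(y 3:ℂ) + (2*I)*(x 3:ℂ)*(y 2:ℂ)]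


lemma Fspin_eq : Fspin = !![2*I,0,0,0; 0,-(2*I),0,0; 0,0,0,0; 0,0,0,0] := by
  rw [Fspin, clmul01, clmul23]
  norm_num [Matrix.of_add_of, Matrix.cons_add_cons, Matrix.empty_add_empty]
  ring
  all_goals simp


lemma matA (x y : Fin 5 → ℝ) (hx : x 4 = 0) (hy : y 4 = 0) :
    (2 : ℂ) • contrAction x y = Amat x y := by
  rw [contrAction_expand, ccoef01 x y hx hy, ccoef02 x y hx hy, ccoef03 x y hx hy,
    ccoef04 x y hx hy, ccoef12 x y hx hy, ccoef13 x y hx hy, ccoef14 x y hx hy,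
    ccoef23 x y hx hy, ccoef24 x y hx hy, ccoef34 x y hx hy,
    clmul01, clmul02, clmul03, clmul04, clmul12, clmul13, clmul14, clmul23, clmul24, clmul34]
  ext a b
  fin_cases a <;> fin_cases b <;>
    · simp [Amat, Matrix.vecHead, Matrix.vecTail]
      try push_cast
      try ring_nf
      try simp [Complex.ext_iff]
      try norm_num
      try (and_intros <;> ring)
      try ring

lemma matB (x y : Fin 5 → ℝ) (hx : x 4 = 0) (hy : y 4 = 0) :
    -(clv y * clv x) + clv x * clv y = Bmat x y := by
  rw [clv_eq x, clv_eq y, mul_fin_four, mul_fin_four]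
  ext a b
  fin_cases a <;> fin_cases b <;>
    · simp [Bmat, Matrix.vecHead, Matrix.vecTail, hx, hy]
      try push_cast
      try ring_nf
      try simp [Complex.ext_iff]
      try norm_num
      try (and_intros <;> ring)
      try ring

lemma matC (x y : Fin 5 → ℝ) (hx : x 4 = 0) (hy : y 4 = 0) :
    clv y * clv x - clv x * clv y = Cmat x y := by
  rw [clv_eq x, clv_eq y, mul_fin_four, mul_fin_four]
  ext a b
  fin_cases a <;> fin_cases b <;>
    · simp [Cmat, Matrix.vecHead, Matrix.vecTail, hx, hy]
      try push_cast
      try ring_nf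
      try simp [Complex.ext_iff]
      try norm_num
      try (and_intros <;> ring)
      try ring

/-- For a vector `X ⊥ e₅` and a 1-form `df` with `df(e₅) = 0`, as endomorphisms of
the spinor space one has `2·(X ⨼ ((df∘φ) ∧ F)) = -df·X + X·df` on `Δ₅²` and
`2·(X ⨼ ((df∘φ) ∧ F)) = df·X - X·df` on `Δ₅^±`, where `·` is Clifford multiplication. -/
theorem stmt18 (x y : Fin 5 → ℝ) (hx : x 4 = 0) (hy : y 4 = 0) :
    (∀ ψ : Fin 4 → ℂ, Fspin *ᵥ ψ = 0 →
        ((2 : ℂ) • contrAction x y) *ᵥ ψ =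
          (-(clv y * clv x) + clv x * clv y) *ᵥ ψ) ∧
      (∀ ψ : Fin 4 → ℂ, (Fspin *ᵥ ψ = (2 * I) • ψ ∨ Fspin *ᵥ ψ = (-(2 * I)) • ψ) →
        ((2 : ℂ) • contrAction x y) *ᵥ ψ =
          (clv y * clv x - clv x * clv y) *ᵥ ψ) := by
  constructor
  · intro ψ hψ
    rw [Fspin_eq] at hψ
    have h0 : ψ 0 = 0 := by
      have := congrFun hψ 0
      simp [Matrix.mulVec, dotProduct, Fin.sum_univ_four, Matrix.vecHead, Matrix.vecTail, Complex.ext_iff] at this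
      exact Complex.ext (by simpa using this.1) (by simpa using this.2)
    have h1 : ψ 1 = 0 := by
      have := congrFun hψ 1
      simp [Matrix.mulVec, dotProduct, Fin.sum_univ_four, Matrix.vecHead, Matrix.vecTail, Complex.ext_iff] at this
      exact Complex.ext (by simpa using this.1) (by simpa using this.2)
    rw [matA x y hx hy, matB x y hx hy]
    funext k
    fin_cases k <;>
      simp [Amat, Bmat, Matrix.mulVec, dotProduct, Fin.sum_univ_four, h0, h1]
  · intro ψ hψ
    rw [Fspin_eq] at hψ
    have h23 : ψ 2 = 0 ∧ ψ 3 = 0 := by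
      rcases hψ with hψ | hψ <;>
      · constructor
        · have := congrFun hψ 2
          simp [Matrix.mulVec, dotProduct, Fin.sum_univ_four, Matrix.vecHead, Matrix.vecTail, Complex.ext_iff] at this
          exact Complex.ext (by simpa using this.1) (by simpa using this.2)
        · have := congrFun hψ 3
          simp [Matrix.mulVec, dotProduct, Fin.sum_univ_four, Matrix.vecHead, Matrix.vecTail, Complex.ext_iff] at this
          exact Complex.ext (by simpa using this.1) (by simpa using this.2)
    rw [matA x y hx hy, matC x y hx hy]
    funext k
    fin_cases k <;>
      simp [Amat, Cmat, Matrix.mulVec, dotProduct, Fin.sum_univ_four, h23.1, h23.2]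
end
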